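/- For 0 < ε < 1, P > 0, σ_n² > 0, define C_Shannon = ((1−ε)/2)·log₂(1 + P/σ_n²), C_MSC = −(1/2)·log₂((σ_n² + εP)/(σ_n² + P)), and C_MSL = (1/2)·log₂(1 + (1−ε)²P/((1−ε)εP + σ_n²)). Then C_Shannon ≥ C_MSC ≥ C_MSL, with all three equal when ε = 0. -/
import Mathlib


open Real

/-- Capacity ordering for the Bernoulli(ε) erasure power-constrained channel:
`C_Shannon ≥ C_MSC ≥ C_MSL` for `0 < ε < 1`, with all three equal when `ε = 0`. -/
theorem stmt_10 (ε P σn2 : ℝ) (hP : 0 < P) (hσn : 0 < σn2) :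
    (0 < ε → ε < 1 →
      -(1 / 2) * Real.logb 2 ((σn2 + ε * P) / (σn2 + P)) ≤
          ((1 - ε) / 2) * Real.logb 2 (1 + P / σn2) ∧
        (1 / 2) * Real.logb 2 (1 + (1 - ε) ^ 2 * P / ((1 - ε) * ε * P + σn2)) ≤
          -(1 / 2) * Real.logb 2 ((σn2 + ε * P) / (σn2 + P))) ∧
    (ε = 0 →
      ((1 - ε) / 2) * Real.logb 2 (1 + P / σn2) =
          -(1 / 2) * Real.logb 2 ((σn2 + ε * P) / (σn2 + P)) ∧
        -(1 / 2) * Real.logb 2 ((σn2 + ε * P) / (σn2 + P)) =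
          (1 / 2) * Real.logb 2 (1 + (1 - ε) ^ 2 * P / ((1 - ε) * ε * P + σn2))) := by
  have h1P : 1 + P / σn2 = (σn2 + P) / σn2 := by field_simp
  have hinv : ∀ ε' : ℝ, -(1 / 2 : ℝ) * Real.logb 2 ((σn2 + ε' * P) / (σn2 + P))
      = (1 / 2 : ℝ) * Real.logb 2 ((σn2 + P) / (σn2 + ε' * P)) := by
    intro ε'
    rw [show (σn2 + P) / (σn2 + ε' * P) = ((σn2 + ε' * P) / (σn2 + P))⁻¹ by
      rw [inv_div], Real.logb_inv]
    ring
  constructor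
  · intro hε0 hε1
    have hεP : 0 < σn2 + ε * P := by nlinarith
    have hSP : 0 < σn2 + P := by linarith
    have h1ε : 0 < 1 - ε := by linarith
    constructor
    · -- MSC ≤ Shannon
      rw [hinv, h1P]
      have hgm := Real.geom_mean_le_arith_mean2_weighted hε0.le h1ε.le hSP.le hσn.le
        (by ring)
      have hgm' : (σn2 + P) ^ ε * σn2 ^ (1 - ε) ≤ σn2 + ε * P := by
        calc (σn2 + P) ^ ε * σn2 ^ (1 - ε) ≤ ε * (σn2 + P) + (1 - ε) * σn2 := hgm
          _ = σn2 + ε * P := by ring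
      have hgmpos : 0 < (σn2 + P) ^ ε * σn2 ^ (1 - ε) := by positivity
      have hkey : (σn2 + P) / (σn2 + ε * P) ≤ ((σn2 + P) / σn2) ^ (1 - ε) := by
        have h2 : (σn2 + P) / (σn2 + ε * P)
            ≤ (σn2 + P) / ((σn2 + P) ^ ε * σn2 ^ (1 - ε)) :=
          div_le_div_of_nonneg_left hSP.le hgmpos hgm'
        have h3 : (σn2 + P) / ((σn2 + P) ^ ε * σn2 ^ (1 - ε))
            = ((σn2 + P) / σn2) ^ (1 - ε) := by
          have hsplit : (σn2 + P) ^ (1 - ε) * (σn2 + P) ^ ε = σn2 + P := by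
            rw [← Real.rpow_add hSP]; norm_num
          rw [Real.div_rpow hSP.le hσn.le,
            div_eq_div_iff hgmpos.ne' (by positivity : σn2 ^ (1 - ε) ≠ 0)]
          linear_combination (-(σn2 ^ (1 - ε))) * hsplit
        linarith [h3 ▸ h2]
      calc (1 / 2 : ℝ) * Real.logb 2 ((σn2 + P) / (σn2 + ε * P))
          ≤ (1 / 2 : ℝ) * Real.logb 2 (((σn2 + P) / σn2) ^ (1 - ε)) := by
            have := Real.logb_le_logb_of_le (b := 2) one_lt_two
              (by positivity : (0:ℝ) < (σn2 + P) / (σn2 + ε * P)) hkey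
            linarith
        _ = ((1 - ε) / 2) * Real.logb 2 ((σn2 + P) / σn2) := by
            rw [Real.logb_rpow_eq_mul_logb_of_pos (by positivity)]; ring
    · -- MSL ≤ MSC
      rw [hinv]
      have hd : 0 < (1 - ε) * ε * P + σn2 := by nlinarith
      have harg : 1 + (1 - ε) ^ 2 * P / ((1 - ε) * ε * P + σn2)
          = (σn2 + (1 - ε) * P) / ((1 - ε) * ε * P + σn2) := by
        field_simp; ring
      rw [harg]
      have hle : (σn2 + (1 - ε) * P) / ((1 - ε) * ε * P + σn2)
          ≤ (σn2 + P) / (σn2 + ε * P) := by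
        rw [div_le_div_iff₀ hd hεP]
        nlinarith [mul_pos (mul_pos h1ε hε0) (mul_pos hσn hP)]
      have := Real.logb_le_logb_of_le (b := 2) one_lt_two
        (by positivity : (0:ℝ) < (σn2 + (1 - ε) * P) / ((1 - ε) * ε * P + σn2)) hle
      linarith
  · intro hε
    subst hε
    constructor
    · rw [hinv 0, h1P]
      norm_num
    · rw [hinv 0]
      norm_num [h1P]
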